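/- L² lower semicontinuity for measure–function pairs: let μ_m (m ∈ ℕ) and μ be finite Borel measures on ℝⁿ with μ_m → μ weakly, i.e. ∫ φ dμ_m → ∫ φ dμ for every continuous compactly supported φ : ℝⁿ → ℝ. Let f_m ∈ L²(μ_m; ℝᵈ) and f ∈ L²(μ; ℝᵈ) be such that ∫ ⟨f_m, φ⟩ dμ_m → ∫ ⟨f, φ⟩ dμ for every continuous compactly supported φ : ℝⁿ → ℝᵈ. Then ∫ |f|² dμ ≤ liminf_{m→∞} ∫ |f_m|² dμ_m. -/

import Mathlib

open MeasureTheory Filter Topology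
open scoped RealInnerProductSpace ENNReal

/-!
By Cauchy–Schwarz and the weak convergence `|φ|² μ_m ⇀ |φ|² μ`, every compactly supported
continuous `φ` satisfies `∫ ⟨f, φ⟩ dμ ≤ (liminf ‖f_m‖_{L²(μ_m)}) ‖φ‖_{L²(μ)}`. Such `φ` are dense
in `L²(μ)`, and letting `φ → f` turns the left side into `‖f‖²_{L²(μ)}`.
-/

theorem norm_le_of_mem_closure_of_inner_le {E : Type*} [NormedAddCommGroup E]
    [InnerProductSpace ℝ E] {S : Set E} {x : E} (hx : x ∈ closure S) {c : ℝ} (hc : 0 ≤ c)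
    (h : ∀ y ∈ S, ⟪x, y⟫ ≤ c * ‖y‖) : ‖x‖ ≤ c := by
  have hxx : ⟪x, x⟫ ≤ c * ‖x‖ :=
    closure_minimal h (isClosed_le (f := fun y => ⟪x, y⟫) (g := fun y => c * ‖y‖)
      (by fun_prop) (by fun_prop)) hx
  rw [real_inner_self_eq_norm_sq] at hxx
  nlinarith [norm_nonneg x]

theorem ENNReal.le_liminf_mul_of_tendsto_of_le {ι : Type*} {l : Filter ι} [l.NeBot]
    {u v w : ι → ℝ≥0∞} {s a : ℝ≥0∞} (hu : Tendsto u l (𝓝 s)) (hv : Tendsto v l (𝓝 a))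
    (ha : a ≠ ∞) (hw : liminf w l ≠ ∞) (huwv : ∀ i, u i ≤ w i * v i) :
    s ≤ liminf w l * a :=
  calc s = liminf u l := hu.liminf_eq.symm
    _ ≤ liminf (v * w) l := liminf_le_liminf (.of_forall fun i => (huwv i).trans_eq (mul_comm _ _))
    _ ≤ limsup v l * liminf w l := ENNReal.liminf_mul_le (.inr hw) (.inl (hv.limsup_eq ▸ ha))
    _ = liminf w l * a := by rw [hv.limsup_eq, mul_comm]

namespace MeasureTheory

variable {α E : Type*} [MeasurableSpace α] {μ : Measure α} [NormedAddCommGroup E]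

theorem MemLp.ofReal_integral_norm_sq {g : α → E} (hg : MemLp g 2 μ) :
    ENNReal.ofReal (∫ x, ‖g x‖ ^ 2 ∂μ) = eLpNorm g 2 μ ^ 2 := by
  rw [hg.eLpNorm_eq_integral_rpow_norm two_ne_zero ENNReal.ofNat_ne_top]
  simp only [ENNReal.toReal_ofNat, Real.rpow_two]
  rw [← ENNReal.ofReal_pow (by positivity)]
  congr 1
  exact_mod_cast
    (Real.rpow_inv_natCast_pow (integral_nonneg fun _ => by positivity) two_ne_zero).symm

theorem tendsto_eLpNorm_two_of_tendsto_integral_norm_sq {ι : Type*} {l : Filter ι}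
    {ν : ι → Measure α} {φ : α → E} (hφ : ∀ i, MemLp φ 2 (ν i)) (hφμ : MemLp φ 2 μ)
    (h : Tendsto (fun i => ∫ x, ‖φ x‖ ^ 2 ∂ν i) l (𝓝 (∫ x, ‖φ x‖ ^ 2 ∂μ))) :
    Tendsto (fun i => eLpNorm φ 2 (ν i)) l (𝓝 (eLpNorm φ 2 μ)) := by
  have hsq := ENNReal.tendsto_ofReal h
  simp only [MemLp.ofReal_integral_norm_sq, hφ, hφμ] at hsq
  have hsqrt := ((ENNReal.continuous_rpow_const (y := (2 : ℕ)⁻¹)).tendsto _).comp hsq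
  simpa only [Function.comp_def, ENNReal.pow_rpow_inv_natCast two_ne_zero] using hsqrt

variable [InnerProductSpace ℝ E]

theorem MemLp.inner_toLp {g h : α → E} (hg : MemLp g 2 μ) (hh : MemLp h 2 μ) :
    ⟪hg.toLp g, hh.toLp h⟫ = ∫ x, ⟪g x, h x⟫ ∂μ := by
  refine integral_congr_ae ?_
  filter_upwards [hg.coeFn_toLp, hh.coeFn_toLp] with x hgx hhx
  rw [hgx, hhx]

theorem MemLp.ofReal_integral_inner_le {g h : α → E} (hg : MemLp g 2 μ) (hh : MemLp h 2 μ) :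
    ENNReal.ofReal (∫ x, ⟪g x, h x⟫ ∂μ) ≤ eLpNorm g 2 μ * eLpNorm h 2 μ := by
  have := real_inner_le_norm (hg.toLp g) (hh.toLp h)
  rw [hg.inner_toLp hh, Lp.norm_toLp, Lp.norm_toLp, ← ENNReal.toReal_mul] at this
  exact ENNReal.ofReal_le_of_le_toReal this

theorem MemLp.eLpNorm_le_of_forall_hasCompactSupport [TopologicalSpace α] [NormalSpace α]
    [BorelSpace α] [R1Space α] [WeaklyLocallyCompactSpace α] [μ.Regular] {f : α → E}
    (hf : MemLp f 2 μ) {c : ℝ≥0∞}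
    (h : ∀ φ : α → E, Continuous φ → HasCompactSupport φ → MemLp φ 2 μ →
      ENNReal.ofReal (∫ x, ⟪f x, φ x⟫ ∂μ) ≤ c * eLpNorm φ 2 μ) :
    eLpNorm f 2 μ ≤ c := by
  rcases eq_or_ne c ∞ with rfl | hc
  · exact le_top
  let S : Set (α →₂[μ] E) :=
    {G | ∃ (φ : α → E) (hφ : MemLp φ 2 μ), Continuous φ ∧ HasCompactSupport φ ∧ hφ.toLp φ = G}
  have hfS : hf.toLp f ∈ closure S := by
    refine Metric.mem_closure_iff.2 fun ε hε => ?_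
    obtain ⟨φ, hφc, hfφ, hφcont, hφ⟩ := hf.exists_hasCompactSupport_eLpNorm_sub_le
      ENNReal.ofNat_ne_top (ε := ENNReal.ofReal (ε / 2)) (by simpa using hε)
    refine ⟨hφ.toLp φ, ⟨φ, hφ, hφcont, hφc, rfl⟩, ?_⟩
    rw [dist_eq_norm, ← MemLp.toLp_sub, Lp.norm_toLp]
    calc (eLpNorm (f - φ) 2 μ).toReal ≤ ε / 2 := ENNReal.toReal_le_of_le_ofReal (by positivity) hfφ
      _ < ε := half_lt_self hε
  have hnorm := norm_le_of_mem_closure_of_inner_le hfS ENNReal.toReal_nonneg fun G hG => by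
    obtain ⟨φ, hφ, hφcont, hφc, rfl⟩ := hG
    rw [hf.inner_toLp hφ, Lp.norm_toLp, ← ENNReal.toReal_mul]
    exact (ENNReal.ofReal_le_iff_le_toReal (ENNReal.mul_ne_top hc hφ.2.ne)).1
      (h φ hφcont hφc hφ)
  rw [Lp.norm_toLp] at hnorm
  exact (ENNReal.toReal_le_toReal hf.2.ne hc).1 hnorm

end MeasureTheory

/-- L² lower semicontinuity for measure–function pairs: if `μ_m → μ` weakly, `f_m ∈ L²(μ_m)`,
`f ∈ L²(μ)` and `∫ ⟨f_m, φ⟩ dμ_m → ∫ ⟨f, φ⟩ dμ` for every continuous compactly supported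
vector field `φ`, then `∫ |f|² dμ ≤ liminf_m ∫ |f_m|² dμ_m`. -/
theorem L2_lower_semicontinuity {n d : ℕ}
    (μseq : ℕ → Measure (EuclideanSpace ℝ (Fin n)))
    (μ : Measure (EuclideanSpace ℝ (Fin n)))
    (hfin : ∀ m, IsFiniteMeasure (μseq m)) (hfinμ : IsFiniteMeasure μ)
    (hconv : ∀ φ : EuclideanSpace ℝ (Fin n) → ℝ, Continuous φ → HasCompactSupport φ →
      Tendsto (fun m => ∫ x, φ x ∂(μseq m)) atTop (𝓝 (∫ x, φ x ∂μ)))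
    (fseq : ℕ → EuclideanSpace ℝ (Fin n) → EuclideanSpace ℝ (Fin d))
    (f : EuclideanSpace ℝ (Fin n) → EuclideanSpace ℝ (Fin d))
    (hfm : ∀ m, MemLp (fseq m) 2 (μseq m)) (hf : MemLp f 2 μ)
    (hpair : ∀ φ : EuclideanSpace ℝ (Fin n) → EuclideanSpace ℝ (Fin d),
      Continuous φ → HasCompactSupport φ →
      Tendsto (fun m => ∫ x, ⟪fseq m x, φ x⟫ ∂(μseq m)) atTop (𝓝 (∫ x, ⟪f x, φ x⟫ ∂μ))) :
    ENNReal.ofReal (∫ x, ‖f x‖ ^ 2 ∂μ) ≤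
      liminf (fun m => ENNReal.ofReal (∫ x, ‖fseq m x‖ ^ 2 ∂(μseq m))) atTop := by
  set L := liminf (fun m => eLpNorm (fseq m) 2 (μseq m)) atTop
  have hsq : liminf (fun m => ENNReal.ofReal (∫ x, ‖fseq m x‖ ^ 2 ∂(μseq m))) atTop = L ^ 2 := by
    simp only [MemLp.ofReal_integral_norm_sq, hfm]
    exact ((pow_left_mono 2).map_liminf_of_continuousAt _
      (ENNReal.continuous_pow 2).continuousAt).symm
  rw [hf.ofReal_integral_norm_sq, hsq]
  gcongr
  rcases eq_or_ne L ∞ with hL | hL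
  · exact hL ▸ le_top
  refine hf.eLpNorm_le_of_forall_hasCompactSupport fun φ hφcont hφc hφ => ?_
  have hφm (m : ℕ) : MemLp φ 2 (μseq m) := hφcont.memLp_of_hasCompactSupport hφc
  have hφnorm := tendsto_eLpNorm_two_of_tendsto_integral_norm_sq hφm hφ
    (hconv _ (by fun_prop) (hφc.comp_left (g := fun y => ‖y‖ ^ 2) (by simp)))
  exact ENNReal.le_liminf_mul_of_tendsto_of_le (ENNReal.tendsto_ofReal (hpair φ hφcont hφc))
    hφnorm hφ.2.ne hL fun m => (hfm m).ofReal_integral_inner_le (hφm m)
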